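/- For the linear collision operator with strictly positive symmetric kernel, if f is continuous and strictly positive on S² and ∫_{S²} η′(f(v)) Q(f)(v) dv = 0 for the Maxwell–Boltzmann entropy η(f) = f log f - f, then f is constant on S². -/
import Mathlib


open MeasureTheory Real

noncomputable def S2 := Metric.sphere (0 : EuclideanSpace ℝ (Fin 3)) 1

noncomputable def μS : Measure S2 := (volume : Measure (EuclideanSpace ℝ (Fin 3))).toSphere

open Set Metric in
lemma toSphere_isOpenPosMeasure {E : Type*} [NormedAddCommGroup E] [NormedSpace ℝ E]
    [MeasurableSpace E] [BorelSpace E] [FiniteDimensional ℝ E] [Nontrivial E]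
    (μ : Measure E) [μ.IsAddHaarMeasure] : μ.toSphere.IsOpenPosMeasure := by
  constructor
  intro U hU hne h0
  set W : Set (Ioi (0:ℝ)) := Iio ⟨1, Set.mem_Ioi.2 one_pos⟩ with hW
  have hWopen : IsOpen W := isOpen_induced_iff.2 ⟨Iio 1, isOpen_Iio, rfl⟩
  have hprod : (μ.toSphere.prod (Measure.volumeIoiPow (Module.finrank ℝ E - 1))) (U ×ˢ W) = 0 := by
    rw [Measure.prod_prod, h0, zero_mul]
  have hmp := μ.measurePreserving_homeomorphUnitSphereProd
  have hmeas : MeasurableSet (U ×ˢ W) := hU.measurableSet.prod hWopen.measurableSet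
  have hpre : (μ.comap Subtype.val) ((homeomorphUnitSphereProd E) ⁻¹' (U ×ˢ W)) = 0 := by
    rw [hmp.measure_preimage hmeas.nullMeasurableSet, hprod]
  have hcomap : (μ.comap Subtype.val)
      ((homeomorphUnitSphereProd E) ⁻¹' (U ×ˢ W))
      = μ (Subtype.val '' ((homeomorphUnitSphereProd E) ⁻¹' (U ×ˢ W))) :=
    (MeasurableEmbedding.subtype_coe (measurableSet_singleton (0:E)).compl).comap_apply μ _
  have hVopen : IsOpen (Subtype.val '' ((homeomorphUnitSphereProd E) ⁻¹' (U ×ˢ W))) := by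
    exact (isOpen_compl_singleton).isOpenMap_subtype_val _
      ((homeomorphUnitSphereProd E).continuous.isOpen_preimage _ (hU.prod hWopen))
  have hVne : (Subtype.val '' ((homeomorphUnitSphereProd E) ⁻¹' (U ×ˢ W))).Nonempty := by
    obtain ⟨x, hx⟩ := hne
    have hmem : (homeomorphUnitSphereProd E).symm (x, ⟨(1:ℝ)/2, by norm_num⟩)
        ∈ (homeomorphUnitSphereProd E) ⁻¹' (U ×ˢ W) := by
      simp only [Set.mem_preimage, Homeomorph.apply_symm_apply]
      refine ⟨hx, ?_⟩
      show (⟨(1:ℝ)/2, _⟩ : Ioi (0:ℝ)) ∈ Iio _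
      rw [Set.mem_Iio, Subtype.mk_lt_mk]
      norm_num
    exact ⟨_, ⟨_, hmem, rfl⟩⟩
  have := hVopen.measure_pos μ hVne
  rw [← hcomap, hpre] at this
  exact lt_irrefl _ this

/-- Equality in the entropy dissipation inequality for the Maxwell–Boltzmann entropy
(`η'(f) = log f`) with a strictly positive continuous symmetric kernel forces `f` to be
constant on the sphere. -/
theorem stmt4 (k : S2 → S2 → ℝ)
    (hk_cont : Continuous (Function.uncurry k))
    (hsym : ∀ u v, k u v = k v u)
    (hpos : ∀ u v, 0 < k u v)
    (f : S2 → ℝ) (hf_cont : Continuous f) (hf_pos : ∀ v, 0 < f v)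
    (Q : S2 → ℝ)
    (hQ : Q = fun v => ∫ u, k u v * (f u - f v) ∂μS)
    (hdiss : ∫ v, Real.log (f v) * Q v ∂μS = 0) :
    ∃ c : ℝ, ∀ v, f v = c := by
  haveI hcs : CompactSpace S2 := by unfold S2; infer_instance
  haveI hne : Nonempty S2 := by
    unfold S2
    exact ((NormedSpace.sphere_nonempty (x := (0 : EuclideanSpace ℝ (Fin 3)))).2
      zero_le_one).to_subtype
  haveI hfin : IsFiniteMeasure μS := by unfold μS S2; infer_instance
  haveI hopos : μS.IsOpenPosMeasure := by unfold μS S2; exact toSphere_isOpenPosMeasure _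
  haveI : SFinite μS := inferInstance
  set g : S2 → ℝ := fun v => Real.log (f v) with hgdef
  have hg_cont : Continuous g := hf_cont.log fun v => (hf_pos v).ne'
  -- the symmetrized nonnegative integrand
  set F : S2 × S2 → ℝ :=
    fun p => k p.1 p.2 * ((g p.1 - g p.2) * (f p.1 - f p.2)) with hFdef
  have hF_cont : Continuous F := by
    exact hk_cont.mul
      (((hg_cont.comp continuous_fst).sub (hg_cont.comp continuous_snd)).mul
        ((hf_cont.comp continuous_fst).sub (hf_cont.comp continuous_snd)))
  have hF_nonneg : ∀ p, 0 ≤ F p := by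
    intro p
    refine mul_nonneg (hpos _ _).le ?_
    rcases le_total (f p.1) (f p.2) with h | h
    · have h1 : g p.1 - g p.2 ≤ 0 := sub_nonpos.2 (Real.log_le_log (hf_pos _) h)
      have h2 : f p.1 - f p.2 ≤ 0 := sub_nonpos.2 h
      nlinarith
    · exact mul_nonneg (sub_nonneg.2 (Real.log_le_log (hf_pos _) h)) (sub_nonneg.2 h)
  have hF_int : Integrable F (μS.prod μS) :=
    hF_cont.integrable_of_hasCompactSupport (isClosed_tsupport F).isCompact
  -- B p = g p.1 * (k p.2 p.1 * (f p.2 - f p.1))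
  set B : S2 × S2 → ℝ := fun p => g p.1 * (k p.2 p.1 * (f p.2 - f p.1)) with hBdef
  have hB_cont : Continuous B := by
    have hk2 : Continuous fun p : S2 × S2 => k p.2 p.1 :=
      hk_cont.comp (continuous_snd.prodMk continuous_fst)
    exact (hg_cont.comp continuous_fst).mul
      (hk2.mul ((hf_cont.comp continuous_snd).sub (hf_cont.comp continuous_fst)))
  have hB_int : Integrable B (μS.prod μS) :=
    hB_cont.integrable_of_hasCompactSupport (isClosed_tsupport B).isCompact
  have hBs_int : Integrable (fun p => B (Prod.swap p)) (μS.prod μS) :=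
    (hB_cont.comp continuous_swap).integrable_of_hasCompactSupport
      (isClosed_tsupport _).isCompact
  -- I = ∫ B over the product measure
  have hI : ∫ p, B p ∂(μS.prod μS) = 0 := by
    rw [MeasureTheory.integral_prod _ hB_int]
    rw [hQ] at hdiss
    calc ∫ v, ∫ u, B (v, u) ∂μS ∂μS
        = ∫ v, Real.log (f v) * ∫ u, k u v * (f u - f v) ∂μS ∂μS := by
          refine integral_congr_ae (Filter.Eventually.of_forall fun v => ?_)
          simpa using MeasureTheory.integral_const_mul (Real.log (f v))
            (fun u => k u v * (f u - f v))
      _ = 0 := hdiss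
  have hIswap : ∫ p, B (Prod.swap p) ∂(μS.prod μS) = 0 := by
    rw [MeasureTheory.integral_prod_swap B, hI]
  have hFI : ∫ p, F p ∂(μS.prod μS) = 0 := by
    have hsum : ∀ p : S2 × S2, F p = -(B p + B (Prod.swap p)) := by
      intro p
      simp only [hBdef, hFdef, Prod.swap]
      rw [hsym p.2 p.1]
      ring
    calc ∫ p, F p ∂(μS.prod μS)
        = ∫ p, -(B p + B (Prod.swap p)) ∂(μS.prod μS) :=
          integral_congr_ae (Filter.Eventually.of_forall hsum)
      _ = -((∫ p, B p ∂(μS.prod μS)) + ∫ p, B (Prod.swap p) ∂(μS.prod μS)) := by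
          rw [integral_neg, integral_add hB_int hBs_int]
      _ = 0 := by rw [hI, hIswap]; ring
  -- conclude F = 0 everywhere
  have hFae : F =ᵐ[μS.prod μS] 0 :=
    (integral_eq_zero_iff_of_nonneg hF_nonneg hF_int).1 hFI
  have hF0 : F = 0 := (hF_cont.ae_eq_iff_eq (μS.prod μS) continuous_const).1 hFae
  -- deduce f is constant
  obtain ⟨v0⟩ := hne
  refine ⟨f v0, fun v => ?_⟩
  by_contra hvne
  have hFzero : F (v, v0) = 0 := by rw [hF0]; rfl
  have hprodpos : 0 < (g v - g v0) * (f v - f v0) := by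
    rcases lt_or_gt_of_ne hvne with h | h
    · exact mul_pos_of_neg_of_neg
        (sub_neg.2 (Real.log_lt_log (hf_pos _) h)) (sub_neg.2 h)
    · exact mul_pos (sub_pos.2 (Real.log_lt_log (hf_pos _) h)) (sub_pos.2 h)
  have : 0 < F (v, v0) := mul_pos (hpos _ _) hprodpos
  rw [hFzero] at this
  exact lt_irrefl _ this
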